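/- arXiv:1911.03152 — 2 statements merged into one kernel-verified Lean document; each statement's English description precedes it below -/
import Mathlib

section
/- Let f satisfy condition (1.2) and assume t₀ ∈ (−∞, 0) is such that f(t) = 0 for every t ≤ t₀ and f(t) > 0 for every t > t₀. Suppose that for each λ < 0, u_λ is a classical solution of (P_f^λ) on Ω. Then u_λ converges to the constant t₀ uniformly on compact subsets of Ω as λ → −∞: for every compact set K ⊂ Ω and every ε > 0 there exists λ̄ < 0 such that sup_{x ∈ K} |u_λ(x) − t₀| < ε for all λ < λ̄. -/
open Set MeasureTheory Filter Topology

/-- The Laplacian of `u` at `x`: the trace of the Hessian of `u`. -/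
noncomputable def laplacian {N : ℕ} (u : EuclideanSpace ℝ (Fin N) → ℝ)
    (x : EuclideanSpace ℝ (Fin N)) : ℝ :=
  ∑ i : Fin N, iteratedFDeriv ℝ 2 u x ![EuclideanSpace.single i 1, EuclideanSpace.single i 1]

/-- A classical solution of the problem `(P_f^λ)` on `Ω`:
`u` is continuous on the closure of `Ω`, twice continuously differentiable on `Ω`,
satisfies `-Δ u = λ f(u)` in `Ω` and `u = 0` on `∂ Ω`. -/
def IsClassicalSolution {N : ℕ} (Ω : Set (EuclideanSpace ℝ (Fin N))) (lam : ℝ)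
    (f : ℝ → ℝ) (u : EuclideanSpace ℝ (Fin N) → ℝ) : Prop :=
  ContinuousOn u (closure Ω) ∧ ContDiffOn ℝ 2 u Ω ∧
    (∀ x ∈ Ω, -laplacian u x = lam * f (u x)) ∧
    (∀ x ∈ frontier Ω, u x = 0)

/-- Condition (1.2): `f` is continuous, non-decreasing, non-negative and `f 0 > 0`. -/
def Cond12 (f : ℝ → ℝ) : Prop :=
  Continuous f ∧ Monotone f ∧ (∀ t, 0 ≤ f t) ∧ 0 < f 0

/-!
Everything rests on the weak maximum principle: a function with nonnegative Laplacian at the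
points of an open bounded set where it exceeds `M`, and at most `M` on the boundary, is at most
`M` throughout; it is proved by adding `δ ‖x - x₀‖²` and using that the Hessian is negative
semidefinite at an interior maximum.

Since `Δu_λ = -λ f(u_λ) ≥ 0`, the principle gives `u_λ ≤ 0`; where `u_λ < t₀` we have
`f(u_λ) = 0`, so `u_λ` is harmonic there and `u_λ ≥ t₀`. For the upper bound at `x₀ ∈ K` take
`m = t₀ + ε/2` and a ball `B(x₀, δ) ⊆ Ω`. Where `u_λ > m`, `Δu_λ ≥ -λ f(m) > 0`, so
`u_λ - a ‖x - x₀‖²` with `a = -λ f(m) / (2N)` is subharmonic there; on `∂B` it is at most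
`-a δ²`, which is below `m` once `λ` is negative enough, hence `u_λ(x₀) ≤ m`.
-/

theorem iteratedFDeriv_two_nonpos_of_isLocalMax {E : Type*} [NormedAddCommGroup E]
    [NormedSpace ℝ E] {g : E → ℝ} {x : E} (hg : ContDiffAt ℝ 2 g x) (hmax : IsLocalMax g x)
    (v : E) : iteratedFDeriv ℝ 2 g x ![v, v] ≤ 0 := by
  set φ : ℝ → E := fun t => x + t • v
  have hφ : ∀ t, HasDerivAt φ v t := fun t => by
    simpa only [one_smul] using ((hasDerivAt_id' t).smul_const v).const_add x
  have hφ0 : φ 0 = x := by simp [φ]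
  have hφx : Tendsto φ (𝓝 0) (𝓝 x) := hφ0 ▸ (hφ 0).continuousAt.tendsto
  have hderiv : deriv (g ∘ φ) =ᶠ[𝓝 0] fun t => fderiv ℝ g (φ t) v := by
    filter_upwards [hφx.eventually (hg.eventually (by simp))] with t ht
    exact ((ht.differentiableAt (by simp)).hasFDerivAt.comp_hasDerivAt t (hφ t)).deriv
  have hsecond : HasDerivAt (deriv (g ∘ φ)) (iteratedFDeriv ℝ 2 g x ![v, v]) 0 := by
    have hg' : DifferentiableAt ℝ (fderiv ℝ g) (φ 0) :=
      hφ0 ▸ (hg.fderiv_right (m := 1) (by norm_num)).differentiableAt (by simp)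
    have hψ := (ContinuousLinearMap.apply ℝ ℝ v).hasFDerivAt.comp_hasDerivAt 0
      (hg'.hasFDerivAt.comp_hasDerivAt 0 (hφ 0))
    rw [iteratedFDeriv_two_apply]
    simpa [hφ0] using hψ.congr_of_eventuallyEq hderiv
  -- otherwise, by the second-derivative test, `g ∘ φ` would be both a local min and a local max
  by_contra! hpos
  have hmin : IsLocalMin (g ∘ φ) 0 :=
    isLocalMin_of_deriv_deriv_pos (hsecond.deriv ▸ hpos)
      (by simp [hderiv.eq_of_nhds, hφ0, hmax.fderiv_eq_zero])
      ((hφ0 ▸ hg.continuousAt).comp (hφ 0).continuousAt)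
  have hconst : g ∘ φ =ᶠ[𝓝 0] fun _ => g x := by
    filter_upwards [hmin, (hφ0 ▸ hmax).comp_continuous (hφ 0).continuousAt] with t h₁ h₂
    exact le_antisymm (hφ0 ▸ h₂) (hφ0 ▸ h₁)
  exact hpos.ne' (by simpa [hsecond.deriv] using hconst.deriv.deriv_eq)

section Laplacian

variable {N : ℕ}

theorem laplacian_nonpos_of_isLocalMax {g : EuclideanSpace ℝ (Fin N) → ℝ}
    {x : EuclideanSpace ℝ (Fin N)} (hg : ContDiffAt ℝ 2 g x) (hmax : IsLocalMax g x) :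
    laplacian g x ≤ 0 :=
  Finset.sum_nonpos fun _ _ => iteratedFDeriv_two_nonpos_of_isLocalMax hg hmax _

theorem laplacian_neg (g : EuclideanSpace ℝ (Fin N) → ℝ) (x : EuclideanSpace ℝ (Fin N)) :
    laplacian (fun y => -g y) x = -laplacian g x := by
  simp [laplacian, ← Pi.neg_def, iteratedFDeriv_neg_apply]

theorem iteratedFDeriv_two_norm_sub_sq {E : Type*} [NormedAddCommGroup E] [InnerProductSpace ℝ E]
    (c x v : E) : iteratedFDeriv ℝ 2 (fun y => ‖y - c‖ ^ 2) x ![v, v] = 2 * ‖v‖ ^ 2 := by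
  have hD : fderiv ℝ (fun y => ‖y - c‖ ^ 2) = fun y => 2 • innerSL ℝ (y - c) := by
    funext y
    have hcomp := (hasStrictFDerivAt_norm_sq (y - c)).hasFDerivAt.comp y
      ((hasFDerivAt_id y).sub_const c)
    rw [ContinuousLinearMap.comp_id] at hcomp
    exact hcomp.fderiv
  have hD2 : HasFDerivAt (fun y => 2 • innerSL ℝ (y - c)) (2 • innerSL ℝ) x :=
    ((2 • innerSL ℝ : E →L[ℝ] E →L[ℝ] ℝ).hasFDerivAt.comp x
      ((hasFDerivAt_id x).sub_const c)).congr_of_eventuallyEq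
      (Eventually.of_forall fun y => by simp)
  rw [iteratedFDeriv_two_apply, hD, hD2.fderiv]
  simp only [Matrix.cons_val_zero, Matrix.cons_val_one, smul_apply, nsmul_eq_mul,
    Nat.cast_ofNat]
  exact congrArg _ (real_inner_self_eq_norm_sq v)

theorem laplacian_add_mul_norm_sub_sq {g : EuclideanSpace ℝ (Fin N) → ℝ}
    {x : EuclideanSpace ℝ (Fin N)} (hg : ContDiffAt ℝ 2 g x) (a : ℝ)
    (c : EuclideanSpace ℝ (Fin N)) :
    laplacian (fun y => g y + a * ‖y - c‖ ^ 2) x = laplacian g x + 2 * N * a := by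
  have hq : ContDiffAt ℝ 2 (fun y : EuclideanSpace ℝ (Fin N) => ‖y - c‖ ^ 2) x :=
    ((contDiff_norm_sq ℝ).comp (contDiff_id.sub contDiff_const)).contDiffAt
  have hsplit : iteratedFDeriv ℝ 2 (fun y => g y + a * ‖y - c‖ ^ 2) x
      = iteratedFDeriv ℝ 2 g x + a • iteratedFDeriv ℝ 2 (fun y => ‖y - c‖ ^ 2) x := by
    rw [← iteratedFDeriv_const_smul_apply' hq]
    exact fun_iteratedFDeriv_add_apply hg (hq.const_smul a)
  simp [laplacian, hsplit, Finset.sum_add_distrib, iteratedFDeriv_two_norm_sub_sq]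
  ring

end Laplacian

section MaximumPrinciple

variable {N : ℕ} {U : Set (EuclideanSpace ℝ (Fin N))} {w : EuclideanSpace ℝ (Fin N) → ℝ} {M : ℝ}

theorem le_on_closure_of_laplacian_pos (hUo : IsOpen U) (hUb : Bornology.IsBounded U)
    (hwc : ContinuousOn w (closure U)) (hw : ContDiffOn ℝ 2 w U)
    (hΔ : ∀ y ∈ U, M < w y → 0 < laplacian w y) (hM : ∀ y ∈ frontier U, w y ≤ M) :
    ∀ x ∈ closure U, w x ≤ M := by
  intro x hx
  obtain ⟨z, hz, hzmax⟩ := hUb.isCompact_closure.exists_isMaxOn ⟨x, hx⟩ hwc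
  refine (hzmax hx).trans (not_lt.1 fun hlt => ?_)
  have hzU : z ∈ U := by
    rcases closure_eq_self_union_frontier U ▸ hz with hzU | hzU
    · exact hzU
    · exact absurd (hM z hzU) hlt.not_ge
  have hloc : IsLocalMax w z :=
    hzmax.isLocalMax (mem_of_superset (hUo.mem_nhds hzU) subset_closure)
  exact (laplacian_nonpos_of_isLocalMax (hw.contDiffAt (hUo.mem_nhds hzU)) hloc).not_gt
    (hΔ z hzU hlt)

theorem le_on_closure_of_laplacian_nonneg (hN : 0 < N) (hUo : IsOpen U)
    (hUb : Bornology.IsBounded U) (hwc : ContinuousOn w (closure U)) (hw : ContDiffOn ℝ 2 w U)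
    (hΔ : ∀ y ∈ U, M < w y → 0 ≤ laplacian w y) (hM : ∀ y ∈ frontier U, w y ≤ M) :
    ∀ x ∈ closure U, w x ≤ M := by
  intro x hx
  obtain ⟨R, hR, hUR⟩ := hUb.closure.subset_closedBall_lt 0 x
  refine le_of_forall_pos_le_add fun ε hε => ?_
  -- `w + δ ‖· - x‖²` is strictly subharmonic where it exceeds `M + ε`, and `δ R² = ε`
  set δ := ε / R ^ 2
  have hδ : 0 < δ := by positivity
  have hpert : ∀ y ∈ closure U, δ * ‖y - x‖ ^ 2 ≤ ε := fun y hy => by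
    have hyR : ‖y - x‖ ≤ R := mem_closedBall_iff_norm.1 (hUR hy)
    calc δ * ‖y - x‖ ^ 2 ≤ δ * R ^ 2 := by gcongr
      _ = ε := div_mul_cancel₀ ε (by positivity)
  have hq : ContDiff ℝ 2 fun y : EuclideanSpace ℝ (Fin N) => δ * ‖y - x‖ ^ 2 :=
    contDiff_const.mul ((contDiff_norm_sq ℝ).comp (contDiff_id.sub contDiff_const))
  have key := le_on_closure_of_laplacian_pos (w := fun y => w y + δ * ‖y - x‖ ^ 2) (M := M + ε)
    hUo hUb (hwc.add hq.continuous.continuousOn) (hw.add hq.contDiffOn) ?_ ?_ x hx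
  · simpa using key
  · intro y hy hlt
    rw [laplacian_add_mul_norm_sub_sq (hw.contDiffAt (hUo.mem_nhds hy))]
    have hNδ : 0 < 2 * (N : ℝ) * δ := by have : (0 : ℝ) < N := Nat.cast_pos.2 hN; positivity
    linarith [hΔ y hy (by linarith [hpert y (subset_closure hy)])]
  · intro y hy
    linarith [hM y hy, hpert y (frontier_subset_closure hy)]

end MaximumPrinciple

namespace IsClassicalSolution

variable {N : ℕ} {Ω : Set (EuclideanSpace ℝ (Fin N))} {lam : ℝ} {f : ℝ → ℝ}
  {u : EuclideanSpace ℝ (Fin N) → ℝ}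

theorem laplacian_eq (hu : IsClassicalSolution Ω lam f u) {x : EuclideanSpace ℝ (Fin N)}
    (hx : x ∈ Ω) : laplacian u x = -lam * f (u x) := by
  linarith [hu.2.2.1 x hx]

theorem nonpos (hN : 0 < N) (hΩo : IsOpen Ω) (hΩb : Bornology.IsBounded Ω)
    (hf : ∀ t, 0 ≤ f t) (hlam : lam ≤ 0) (hu : IsClassicalSolution Ω lam f u) :
    ∀ x ∈ closure Ω, u x ≤ 0 :=
  le_on_closure_of_laplacian_nonneg hN hΩo hΩb hu.1 hu.2.1
    (fun y hy _ => by rw [hu.laplacian_eq hy]; exact mul_nonneg (neg_nonneg.2 hlam) (hf _))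
    (fun y hy => (hu.2.2.2 y hy).le)

theorem ge_of_forall_le_eq_zero (hN : 0 < N) (hΩo : IsOpen Ω) (hΩb : Bornology.IsBounded Ω)
    {t₀ : ℝ} (ht₀ : t₀ ≤ 0) (hf0 : ∀ t ≤ t₀, f t = 0) (hu : IsClassicalSolution Ω lam f u) :
    ∀ x ∈ closure Ω, t₀ ≤ u x := by
  have key := le_on_closure_of_laplacian_nonneg (w := fun y => -u y) (M := -t₀) hN hΩo hΩb
    hu.1.neg hu.2.1.neg
    (fun y hy hlt => by rw [laplacian_neg, hu.laplacian_eq hy, hf0 _ (by linarith)]; simp)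
    (fun y hy => by simp [hu.2.2.2 y hy, ht₀])
  exact fun x hx => neg_le_neg_iff.1 (key x hx)

theorem le_of_closedBall_subset (hN : 0 < N) (hf : Monotone f) (hlam : lam ≤ 0)
    (hu : IsClassicalSolution Ω lam f u) (hu0 : ∀ y ∈ Ω, u y ≤ 0)
    {x₀ : EuclideanSpace ℝ (Fin N)} {r : ℝ} (hr : 0 < r) (hball : Metric.closedBall x₀ r ⊆ Ω)
    {m : ℝ} (hfm : 0 ≤ f m) (hm : lam * f m * r ^ 2 ≤ 2 * N * m) :
    u x₀ ≤ m := by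
  have hN' : (0 : ℝ) < N := Nat.cast_pos.2 hN
  -- `Δ (a ‖· - x₀‖²) = -λ f(m) ≤ Δ u` wherever `u > m`
  set a := -lam * f m / (2 * N)
  have ha : 0 ≤ a := div_nonneg (mul_nonneg (neg_nonneg.2 hlam) hfm) (by positivity)
  have h2Na : 2 * N * a = -lam * f m := by simp only [a]; field_simp
  have hq : ContDiff ℝ 2 fun y : EuclideanSpace ℝ (Fin N) => -a * ‖y - x₀‖ ^ 2 :=
    contDiff_const.mul ((contDiff_norm_sq ℝ).comp (contDiff_id.sub contDiff_const))
  have hclosure : closure (Metric.ball x₀ r) ⊆ closure Ω :=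
    Metric.closure_ball_subset_closedBall.trans (hball.trans subset_closure)
  have hu2 : ContDiffOn ℝ 2 u (Metric.ball x₀ r) :=
    hu.2.1.mono (Metric.ball_subset_closedBall.trans hball)
  have key := le_on_closure_of_laplacian_nonneg (w := fun y => u y + -a * ‖y - x₀‖ ^ 2) (M := m)
    hN Metric.isOpen_ball Metric.isBounded_ball
    ((hu.1.mono hclosure).add hq.continuous.continuousOn)
    (hu2.add hq.contDiffOn) ?_ ?_ x₀ (subset_closure (Metric.mem_ball_self hr))
  · simpa using key
  · intro y hy hlt
    have hyΩ : y ∈ Ω := hball (Metric.ball_subset_closedBall hy)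
    rw [laplacian_add_mul_norm_sub_sq (hu2.contDiffAt (Metric.isOpen_ball.mem_nhds hy)),
      hu.laplacian_eq hyΩ]
    have hfu : f m ≤ f (u y) := hf (by nlinarith [sq_nonneg ‖y - x₀‖])
    linarith [mul_le_mul_of_nonneg_left hfu (neg_nonneg.2 hlam)]
  · intro y hy
    rw [frontier_ball x₀ hr.ne', mem_sphere_iff_norm] at hy
    have hyΩ : y ∈ Ω := hball (Metric.sphere_subset_closedBall (mem_sphere_iff_norm.2 hy))
    have hbdry : -a * r ^ 2 ≤ m := by
      rw [show -a * r ^ 2 = lam * f m * r ^ 2 / (2 * N) by simp only [a]; field_simp]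
      rw [div_le_iff₀ (by positivity)]
      linarith
    simp only [hy]
    linarith [hu0 y hyΩ]

end IsClassicalSolution

theorem stmt_4_general {N : ℕ} (hN : 2 ≤ N) (Ω : Set (EuclideanSpace ℝ (Fin N)))
    (hΩo : IsOpen Ω) (hΩb : Bornology.IsBounded Ω)
    (f : ℝ → ℝ) (hf : Cond12 f)
    (t₀ : ℝ) (ht₀ : t₀ < 0) (hf0 : ∀ t ≤ t₀, f t = 0) (hfpos : ∀ t, t₀ < t → 0 < f t)
    (u : ℝ → EuclideanSpace ℝ (Fin N) → ℝ)
    (hu : ∀ lam < (0:ℝ), IsClassicalSolution Ω lam f (u lam)) :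
    ∀ K ⊆ Ω, IsCompact K → ∀ ε > 0, ∃ lb < (0:ℝ), ∀ lam < lb, ∀ x ∈ K,
      |u lam x - t₀| < ε := by
  obtain ⟨-, hf_mono, hf_nonneg, -⟩ := hf
  have hN0 : 0 < N := by omega
  intro K hK hKc ε hε
  obtain ⟨δ, hδ, hKδ⟩ := hKc.exists_cthickening_subset_open hΩo hK
  set m := t₀ + ε / 2 with hm_def
  have hfm : 0 < f m := hfpos m (by linarith [hm_def])
  refine ⟨min (-1) (2 * N * m / (f m * δ ^ 2)), by simp, fun lam hlam x hx => ?_⟩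
  have hlam0 : lam < 0 := hlam.trans_le ((min_le_left _ _).trans (by norm_num))
  have hlam_m : lam * f m * δ ^ 2 ≤ 2 * N * m := by
    have := (lt_div_iff₀ (by positivity)).1 (hlam.trans_le (min_le_right _ _))
    linarith
  have hsol := hu lam hlam0
  have hlower := hsol.ge_of_forall_le_eq_zero hN0 hΩo hΩb ht₀.le hf0 x (subset_closure (hK hx))
  have hupper := hsol.le_of_closedBall_subset hN0 hf_mono hlam0.le
    (fun y hy => hsol.nonpos hN0 hΩo hΩb hf_nonneg hlam0.le y (subset_closure hy)) hδ
    ((Metric.closedBall_subset_cthickening hx δ).trans hKδ) (hf_nonneg m) hlam_m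
  rw [abs_lt]
  constructor <;> linarith [hm_def]

/-- Theorem 1.1 (case `t₀ ∈ ℝ`): the solutions `u_λ` converge to the constant `t₀`
uniformly on compact subsets of `Ω` as `λ → -∞`. -/
theorem stmt_4 {N : ℕ} (hN : 2 ≤ N) (Ω : Set (EuclideanSpace ℝ (Fin N)))
    (hΩo : IsOpen Ω) (hΩb : Bornology.IsBounded Ω) (hΩne : Ω.Nonempty)
    (f : ℝ → ℝ) (hf : Cond12 f)
    (t₀ : ℝ) (ht₀ : t₀ < 0) (hf0 : ∀ t ≤ t₀, f t = 0) (hfpos : ∀ t, t₀ < t → 0 < f t)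
    (u : ℝ → EuclideanSpace ℝ (Fin N) → ℝ)
    (hu : ∀ lam < (0:ℝ), IsClassicalSolution Ω lam f (u lam)) :
    ∀ K ⊆ Ω, IsCompact K → ∀ ε > 0, ∃ lb < (0:ℝ), ∀ lam < lb, ∀ x ∈ K,
      |u lam x - t₀| < ε :=
  stmt_4_general hN Ω hΩo hΩb f hf t₀ ht₀ hf0 hfpos u hu
end

section
/- Let f satisfy condition (1.2) with f(t) > 0 for every t ∈ ℝ and f(t) → 0 as t → −∞. Let α, γ : (−∞, 0) → (0, ∞) satisfy γ(β) → 0 and β/α(β) → A as β → −∞, where A < 0, and let g : (−∞, −A) → (0, ∞) be continuous with f(α(β) t + β)/γ(β) → g(t) as β → −∞, locally uniformly in t ∈ (−∞, −A). Let v be continuous on the closure of Ω, twice continuously differentiable on Ω, with Δv(x) = g(v(x) − A) and v(x) < 0 for every x ∈ Ω, and v(x) = 0 for every x ∈ ∂Ω. Suppose that for each λ < 0, u_λ is a classical solution of (P_f^λ) on Ω, and that β_λ < 0 satisfies −λ = α(β_λ)/γ(β_λ) with β_λ → −∞ as λ → −∞. Then u_λ/α(β_λ) → v uniformly on every compact subset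 of Ω as λ → −∞. -/
open Set MeasureTheory Filter Topology

open scoped Laplacian

/-! Write `a = α β_λ`, `b = β_λ`, `c = γ β_λ`. Then `w = u_λ / a` solves
`Δ w = F (w - b / a)` with `F t = f (a t + b) / c`, and as `λ → -∞` we have `b / a → A` and
`F → g` uniformly on compact subsets of `(-∞, -A)`. For fixed `ε, δ > 0`, once `λ` is very
negative, `(1 + ε) v - δ` and `(1 - ε) v + δ` are barriers for `w`: the factor `1 ± ε` turns the
approximate equation into a strict inequality because `g (v - A) ≥ g (min v - A) > 0`, and the
monotonicity of `f` (hence of `F` and of the limit `g`) orders the nonlinearities. The maximum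
principle for strict differential inequalities squeezes `w` between the barriers, so
`|w - v| ≤ ε ‖v‖_∞ + δ` on `closure Ω`. The bound `u_λ ≤ 0` confines the points where the upper
barrier could fail to `{v < -δ}`, where `v - A` stays in a compact subset of `(-∞, -A)`. -/

theorem IsLocalMin.deriv_deriv_nonneg {f : ℝ → ℝ} {a : ℝ} (hmin : IsLocalMin f a)
    (hc : ContinuousAt f a) : 0 ≤ deriv (deriv f) a := by
  by_contra! hneg
  have hmax : IsLocalMax f a := isLocalMax_of_deriv_deriv_neg hneg hmin.deriv_eq_zero hc
  have hconst : f =ᶠ[𝓝 a] fun _ => f a :=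
    (hmin.and hmax).mono fun x hx => le_antisymm hx.2 hx.1
  have hderiv : deriv f =ᶠ[𝓝 a] fun _ => 0 :=
    hconst.eventuallyEq_nhds.mono fun x hx => by simpa using hx.deriv_eq
  rw [hderiv.deriv_eq, deriv_const] at hneg
  exact hneg.false

theorem IsLocalMin.iteratedFDeriv_two_nonneg {E : Type*} [NormedAddCommGroup E]
    [NormedSpace ℝ E] {φ : E → ℝ} {x : E} (hmin : IsLocalMin φ x) (hφ : ContDiffAt ℝ 2 φ x)
    (y : E) : 0 ≤ iteratedFDeriv ℝ 2 φ x ![y, y] := by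
  have hline : Tendsto (fun s : ℝ => x + s • y) (𝓝 0) (𝓝 x) :=
    Continuous.tendsto' (by fun_prop) _ _ (by simp)
  have hψmin : IsLocalMin (fun s : ℝ => φ (x + s • y)) 0 := by
    simpa [IsLocalMin, IsMinFilter] using hline.eventually hmin
  have hderiv : deriv (fun s : ℝ => φ (x + s • y)) =ᶠ[𝓝 0]
      fun s => iteratedFDeriv ℝ 1 φ (x + s • y) (fun _ => y) := by
    filter_upwards [hline.eventually (hφ.eventually (by simp))] with s hs
    rw [(hs.differentiableAt two_ne_zero).deriv_comp_add_smul, iteratedFDeriv_one_apply]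
  have hφ' : ContDiffAt ℝ ((1 : ℕ) + 1) φ (x + (0 : ℝ) • y) := by
    simpa [one_add_one_eq_two] using hφ
  have hvec : ![y, y] = fun _ => y := by ext i; fin_cases i <;> rfl
  have key := hψmin.deriv_deriv_nonneg (hφ.continuousAt.comp_of_eq (by fun_prop) (by simp))
  rwa [hderiv.deriv_eq, hφ'.deriv_fderiv_add_smul, zero_smul, add_zero, ← hvec] at key

section Laplacian

variable {E : Type*} [NormedAddCommGroup E] [InnerProductSpace ℝ E] [FiniteDimensional ℝ E]

theorem IsLocalMin.laplacian_nonneg {φ : E → ℝ} {x : E} (hmin : IsLocalMin φ x)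
    (hφ : ContDiffAt ℝ 2 φ x) : 0 ≤ Δ φ x := by
  rw [InnerProductSpace.laplacian_eq_iteratedFDeriv_stdOrthonormalBasis]
  exact Finset.sum_nonneg fun i _ => hmin.iteratedFDeriv_two_nonneg hφ _

theorem laplacian_const_mul_add_const {φ : E → ℝ} {x : E} (hφ : ContDiffAt ℝ 2 φ x) (c d : ℝ) :
    Δ (fun y => c * φ y + d) x = c * Δ φ x := by
  have := (hφ.const_smul c).laplacian_add (contDiffAt_const (c := d))
  simp only [InnerProductSpace.laplacian_const, Pi.zero_apply, add_zero] at this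
  rw [← smul_eq_mul, ← InnerProductSpace.laplacian_smul c hφ]
  exact this

theorem nonneg_of_laplacian_neg {Ω : Set E} (hΩo : IsOpen Ω) (hΩb : Bornology.IsBounded Ω)
    {φ : E → ℝ} (hc : ContinuousOn φ (closure Ω)) (hd : ContDiffOn ℝ 2 φ Ω)
    (hfr : ∀ x ∈ frontier Ω, 0 ≤ φ x) (hlap : ∀ x ∈ Ω, φ x < 0 → Δ φ x < 0) :
    ∀ x ∈ closure Ω, 0 ≤ φ x := by
  intro x hx
  by_contra! hneg
  obtain ⟨x₀, hx₀, hmin⟩ := hΩb.isCompact_closure.exists_isMinOn ⟨x, hx⟩ hc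
  have hφx₀ : φ x₀ < 0 := (hmin hx).trans_lt hneg
  have hx₀Ω : x₀ ∈ Ω := by
    by_contra hno
    exact (hfr x₀ (hΩo.frontier_eq ▸ ⟨hx₀, hno⟩)).not_gt hφx₀
  have hloc : IsLocalMin φ x₀ :=
    hmin.isLocalMin (mem_of_superset (hΩo.mem_nhds hx₀Ω) subset_closure)
  exact (hloc.laplacian_nonneg (hd.contDiffAt (hΩo.mem_nhds hx₀Ω))).not_gt (hlap x₀ hx₀Ω hφx₀)

theorem le_of_laplacian_lt {Ω : Set E} (hΩo : IsOpen Ω) (hΩb : Bornology.IsBounded Ω)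
    {p q : E → ℝ} (hpc : ContinuousOn p (closure Ω)) (hpd : ContDiffOn ℝ 2 p Ω)
    (hqc : ContinuousOn q (closure Ω)) (hqd : ContDiffOn ℝ 2 q Ω)
    (hfr : ∀ x ∈ frontier Ω, p x ≤ q x) (hlap : ∀ x ∈ Ω, q x < p x → Δ q x < Δ p x) :
    ∀ x ∈ closure Ω, p x ≤ q x := by
  have key := nonneg_of_laplacian_neg hΩo hΩb (hqc.sub hpc) (hqd.sub hpd)
    (fun x hx => sub_nonneg.2 (hfr x hx)) fun x hx hneg => by
      have hx' := hΩo.mem_nhds hx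
      rw [(hqd.contDiffAt hx').laplacian_sub (hpd.contDiffAt hx'), sub_neg]
      exact hlap x hx (sub_neg.1 hneg)
  exact fun x hx => sub_nonneg.1 (key x hx)

end Laplacian

theorem laplacian_eq_laplacian {N : ℕ} (u : EuclideanSpace ℝ (Fin N) → ℝ) :
    laplacian u = Δ u := by
  ext x
  rw [InnerProductSpace.laplacian_eq_iteratedFDeriv_orthonormalBasis u
    (EuclideanSpace.basisFun _ ℝ)]
  simp [laplacian, EuclideanSpace.basisFun_apply]

theorem Monotone.comp_affine_div {f : ℝ → ℝ} (hf : Monotone f) {a c : ℝ} (ha : 0 ≤ a)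
    (hc : 0 ≤ c) (b : ℝ) : Monotone fun t => f (a * t + b) / c := fun _ _ htt' =>
  div_le_div_of_nonneg_right (hf (by gcongr)) hc

theorem monotoneOn_of_tendsto {ι α β : Type*} [Preorder α] [TopologicalSpace β] [Preorder β]
    [OrderClosedTopology β] {l : Filter ι} [l.NeBot] {F : ι → α → β} {g : α → β} {s : Set α}
    (hF : ∀ᶠ i in l, Monotone (F i)) (hlim : ∀ t ∈ s, Tendsto (fun i => F i t) l (𝓝 (g t))) :
    MonotoneOn g s := fun _ ht _ ht' htt' =>
  le_of_tendsto_of_tendsto (hlim _ ht) (hlim _ ht') (hF.mono fun _ hi => hi htt')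

section Barrier

variable {F g : ℝ → ℝ} {A θ m ε δ v y : ℝ}

theorem lt_one_add_mul_of_lt (hF : Monotone F) (hg : MonotoneOn g (Iio (-A)))
    (hclose : ∀ t ∈ Icc (m - A - δ / 2) (-A - δ / 2), dist (g t) (F t) < ε * g (m - A))
    (hθ : A - δ / 2 ≤ θ) (hε : 0 ≤ ε) (hδ : 0 ≤ δ) (hm : m ≤ v) (hv : v < 0)
    (hy : y < (1 + ε) * v - δ) : F (y - θ) < (1 + ε) * g (v - A) := by
  have hσ : v - A - δ / 2 ∈ Icc (m - A - δ / 2) (-A - δ / 2) := ⟨by linarith, by linarith⟩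
  have hεv : ε * v ≤ 0 := mul_nonpos_of_nonneg_of_nonpos hε hv.le
  have hFσ : F (y - θ) ≤ F (v - A - δ / 2) := hF (by linarith)
  have hclose_σ := (abs_sub_lt_iff.1 (Real.dist_eq _ _ ▸ hclose _ hσ)).2
  have hgσ : g (v - A - δ / 2) ≤ g (v - A) :=
    hg (show v - A - δ / 2 < -A by linarith) (show v - A < -A by linarith) (by linarith)
  have hgm : ε * g (m - A) ≤ ε * g (v - A) :=
    mul_le_mul_of_nonneg_left (hg (show m - A < -A by linarith) (show v - A < -A by linarith)
      (by linarith)) hε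
  linarith

theorem one_sub_mul_lt_of_lt (hF : Monotone F) (hg : MonotoneOn g (Iio (-A)))
    (hclose : ∀ t ∈ Icc (m - A - δ / 2) (-A - δ / 2), dist (g t) (F t) < ε * g (m - A))
    (hθ : θ ≤ A + δ / 2) (hε : 0 ≤ ε) (hδ : 0 ≤ δ) (hm : m ≤ v) (hv : v < 0) (hy0 : y ≤ 0)
    (hy : (1 - ε) * v + δ < y) : (1 - ε) * g (v - A) < F (y - θ) := by
  have hεv : ε * v ≤ 0 := mul_nonpos_of_nonneg_of_nonpos hε hv.le
  have hvδ : v < -δ := by linarith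
  have hs : v - A + δ / 2 ∈ Icc (m - A - δ / 2) (-A - δ / 2) := ⟨by linarith, by linarith⟩
  have hFs : F (v - A + δ / 2) ≤ F (y - θ) := hF (by linarith)
  have hclose_s := (abs_sub_lt_iff.1 (Real.dist_eq _ _ ▸ hclose _ hs)).1
  have hgs : g (v - A) ≤ g (v - A + δ / 2) :=
    hg (show v - A < -A by linarith) (show v - A + δ / 2 < -A by linarith) (by linarith)
  have hgm : ε * g (m - A) ≤ ε * g (v - A) :=
    mul_le_mul_of_nonneg_left (hg (show m - A < -A by linarith) (show v - A < -A by linarith)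
      (by linarith)) hε
  linarith

end Barrier

theorem abs_sub_le_of_laplacian_eq {E : Type*} [NormedAddCommGroup E] [InnerProductSpace ℝ E]
    [FiniteDimensional ℝ E] {Ω : Set E} (hΩo : IsOpen Ω) (hΩb : Bornology.IsBounded Ω)
    {v w : E → ℝ} {F g : ℝ → ℝ} {A θ m ε δ : ℝ}
    (hvc : ContinuousOn v (closure Ω)) (hvd : ContDiffOn ℝ 2 v Ω)
    (hvbd : ∀ x ∈ frontier Ω, v x = 0) (hvneg : ∀ x ∈ Ω, v x < 0)
    (hveq : ∀ x ∈ Ω, Δ v x = g (v x - A)) (hm : ∀ x ∈ closure Ω, m ≤ v x)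
    (hwc : ContinuousOn w (closure Ω)) (hwd : ContDiffOn ℝ 2 w Ω)
    (hwbd : ∀ x ∈ frontier Ω, w x = 0) (hw0 : ∀ x ∈ Ω, w x ≤ 0)
    (hweq : ∀ x ∈ Ω, Δ w x = F (w x - θ)) (hF : Monotone F) (hg : MonotoneOn g (Iio (-A)))
    (hclose : ∀ t ∈ Icc (m - A - δ / 2) (-A - δ / 2), dist (g t) (F t) < ε * g (m - A))
    (hθ : dist θ A ≤ δ / 2) (hε : 0 ≤ ε) (hδ : 0 ≤ δ) :
    ∀ x ∈ closure Ω, |w x - v x| ≤ ε * -m + δ := by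
  obtain ⟨hθu, hθl⟩ := abs_sub_le_iff.1 (Real.dist_eq θ A ▸ hθ)
  have hlower : ∀ x ∈ closure Ω, (1 + ε) * v x + -δ ≤ w x :=
    le_of_laplacian_lt hΩo hΩb (by fun_prop) (by fun_prop) hwc hwd
      (fun x hx => by simp [hvbd x hx, hwbd x hx, hδ]) fun x hx hlt => by
        rw [laplacian_const_mul_add_const (hvd.contDiffAt (hΩo.mem_nhds hx)), hweq x hx,
          hveq x hx]
        exact lt_one_add_mul_of_lt hF hg hclose (by linarith) hε hδ (hm x (subset_closure hx))
          (hvneg x hx) (by linarith)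
  have hupper : ∀ x ∈ closure Ω, w x ≤ (1 - ε) * v x + δ :=
    le_of_laplacian_lt hΩo hΩb hwc hwd (by fun_prop) (by fun_prop)
      (fun x hx => by simp [hvbd x hx, hwbd x hx, hδ]) fun x hx hlt => by
        rw [laplacian_const_mul_add_const (hvd.contDiffAt (hΩo.mem_nhds hx)), hweq x hx,
          hveq x hx]
        exact one_sub_mul_lt_of_lt hF hg hclose (by linarith) hε hδ (hm x (subset_closure hx))
          (hvneg x hx) (hw0 x hx) hlt
  intro x hx
  have hεm : ε * m ≤ ε * v x := mul_le_mul_of_nonneg_left (hm x hx) hε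
  rw [abs_le]
  constructor <;> linarith [hlower x hx, hupper x hx]

section ClassicalSolution

variable {N : ℕ} {Ω : Set (EuclideanSpace ℝ (Fin N))} {lam : ℝ} {f : ℝ → ℝ}
  {u : EuclideanSpace ℝ (Fin N) → ℝ}

theorem IsClassicalSolution.nonpos_s12 (hΩo : IsOpen Ω) (hΩb : Bornology.IsBounded Ω)
    (hu : IsClassicalSolution Ω lam f u) (hlam : lam < 0) (hf : ∀ t, 0 < f t) :
    ∀ x ∈ closure Ω, u x ≤ 0 := by
  obtain ⟨huc, hud, hueq, hubd⟩ := hu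
  refine le_of_laplacian_lt (q := fun _ => 0) hΩo hΩb huc hud continuousOn_const contDiffOn_const
    (fun x hx => (hubd x hx).le) fun x hx _ => ?_
  have hΔu := hueq x hx
  rw [laplacian_eq_laplacian] at hΔu
  rw [InnerProductSpace.laplacian_const, Pi.zero_apply]
  nlinarith [hf (u x)]

theorem IsClassicalSolution.laplacian_div (hΩo : IsOpen Ω) (hu : IsClassicalSolution Ω lam f u)
    {a c : ℝ} (ha : a ≠ 0) (hlam : -lam = a / c) (b : ℝ) :
    ∀ x ∈ Ω, Δ (fun y => u y / a) x = f (a * (u x / a - b / a) + b) / c := by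
  intro x hx
  have hΔu := hu.2.2.1 x hx
  rw [laplacian_eq_laplacian] at hΔu
  have hdiv : (fun y => u y / a) = fun y => a⁻¹ * u y + 0 := by
    funext y
    ring
  rw [hdiv, laplacian_const_mul_add_const (hu.2.1.contDiffAt (hΩo.mem_nhds hx))]
  field_simp
  rw [sub_add_cancel, mul_div_right_comm, ← hlam]
  linarith

end ClassicalSolution

theorem stmt_12_general {N : ℕ} (Ω : Set (EuclideanSpace ℝ (Fin N)))
    (hΩo : IsOpen Ω) (hΩb : Bornology.IsBounded Ω)
    (f : ℝ → ℝ) (hf : Cond12 f) (hfpos : ∀ t, 0 < f t)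
    (α γ : ℝ → ℝ) (hαpos : ∀ β < (0:ℝ), 0 < α β) (hγpos : ∀ β < (0:ℝ), 0 < γ β)
    (A : ℝ) (hβα : Tendsto (fun β => β / α β) atBot (𝓝 A))
    (g : ℝ → ℝ) (hgpos : ∀ t < -A, 0 < g t)
    (hconv : TendstoLocallyUniformlyOn (fun β t => f (α β * t + β) / γ β) g atBot (Iio (-A)))
    (v : EuclideanSpace ℝ (Fin N) → ℝ)
    (hvc : ContinuousOn v (closure Ω)) (hvd : ContDiffOn ℝ 2 v Ω)
    (hveq : ∀ x ∈ Ω, laplacian v x = g (v x - A)) (hvneg : ∀ x ∈ Ω, v x < 0)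
    (hvbd : ∀ x ∈ frontier Ω, v x = 0)
    (u : ℝ → EuclideanSpace ℝ (Fin N) → ℝ)
    (hu : ∀ lam < (0:ℝ), IsClassicalSolution Ω lam f (u lam))
    (β : ℝ → ℝ) (hβneg : ∀ lam < (0:ℝ), β lam < 0)
    (hβeq : ∀ lam < (0:ℝ), -lam = α (β lam) / γ (β lam))
    (hβatBot : Tendsto β atBot atBot) :
    ∀ K ⊆ Ω, IsCompact K →
      TendstoUniformlyOn (fun lam x => u lam x / α (β lam)) v atBot K := by
  intro K hK _
  refine TendstoUniformlyOn.mono ?_ (hK.trans subset_closure)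
  obtain ⟨m, hm0, hm⟩ : ∃ m < 0, ∀ x ∈ closure Ω, m ≤ v x := by
    obtain ⟨m, hm⟩ := hΩb.isCompact_closure.bddBelow_image hvc
    exact ⟨min m (-1), by simp, fun x hx => (min_le_left _ _).trans (hm ⟨x, hx, rfl⟩)⟩
  have hFmono : ∀ᶠ b in atBot, Monotone fun t => f (α b * t + b) / γ b :=
    (eventually_lt_atBot 0).mono fun b hb =>
      hf.2.1.comp_affine_div (hαpos b hb).le (hγpos b hb).le b
  have hg : MonotoneOn g (Iio (-A)) := monotoneOn_of_tendsto hFmono fun t ht => hconv.tendsto_at ht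
  rw [Metric.tendstoUniformlyOn_iff]
  intro ε₀ hε₀
  have hε : 0 < ε₀ / (2 * -m) := div_pos hε₀ (by linarith)
  have hδ : 0 < ε₀ / 4 := div_pos hε₀ four_pos
  have hI : Icc (m - A - ε₀ / 4 / 2) (-A - ε₀ / 4 / 2) ⊆ Iio (-A) := fun t ht =>
    mem_Iio.2 (by linarith [ht.2])
  filter_upwards [eventually_lt_atBot 0, hβatBot.eventually hFmono,
    (hβα.comp hβatBot).eventually (Metric.closedBall_mem_nhds A (half_pos hδ)),
    hβatBot.eventually (Metric.tendstoUniformlyOn_iff.1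
      ((tendstoLocallyUniformlyOn_iff_forall_isCompact isOpen_Iio).1 hconv _ hI isCompact_Icc)
      _ (mul_pos hε (hgpos (m - A) (by linarith))))] with lam hlam hFlam hθ hclose
  have hsol := hu lam hlam
  have ha := hαpos _ (hβneg lam hlam)
  have hest := abs_sub_le_of_laplacian_eq hΩo hΩb hvc hvd hvbd hvneg
    (fun x hx => laplacian_eq_laplacian v ▸ hveq x hx) hm (hsol.1.div_const _)
    (hsol.2.1.div_const _) (fun x hx => by simp [hsol.2.2.2 x hx])
    (fun x hx => div_nonpos_of_nonpos_of_nonneg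
      (hsol.nonpos_s12 hΩo hΩb hlam hfpos x (subset_closure hx)) ha.le)
    (hsol.laplacian_div hΩo ha.ne' (hβeq lam hlam) (β lam)) hFlam hg hclose hθ hε.le hδ.le
  intro x hx
  have hεm : ε₀ / (2 * -m) * -m = ε₀ / 2 := by field_simp [hm0.ne]
  rw [dist_comm, Real.dist_eq]
  linarith [hest x hx]

/-- Theorem 1.6(ii): if `f > 0`, `f(t) → 0` as `t → -∞`, `β/α(β) → A < 0` and
`f(α(β)t + β)/γ(β) → g(t)` locally uniformly in `t < -A`, then `u_λ/α(β_λ)` converges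
locally uniformly in `Ω` to the (negative) solution `v` of `Δ v = g(v - A)`, `v = 0` on `∂Ω`. -/
theorem stmt_12 {N : ℕ} (hN : 2 ≤ N) (Ω : Set (EuclideanSpace ℝ (Fin N)))
    (hΩo : IsOpen Ω) (hΩb : Bornology.IsBounded Ω) (hΩne : Ω.Nonempty)
    (f : ℝ → ℝ) (hf : Cond12 f) (hfpos : ∀ t, 0 < f t)
    (hflim : Tendsto f atBot (𝓝 0))
    (α γ : ℝ → ℝ) (hαpos : ∀ β < (0:ℝ), 0 < α β) (hγpos : ∀ β < (0:ℝ), 0 < γ β)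
    (hγ0 : Tendsto γ atBot (𝓝 0))
    (A : ℝ) (hA : A < 0) (hβα : Tendsto (fun β => β / α β) atBot (𝓝 A))
    (g : ℝ → ℝ) (hgc : ContinuousOn g (Iio (-A))) (hgpos : ∀ t < -A, 0 < g t)
    (hconv : TendstoLocallyUniformlyOn (fun β t => f (α β * t + β) / γ β) g atBot (Iio (-A)))
    (v : EuclideanSpace ℝ (Fin N) → ℝ)
    (hvc : ContinuousOn v (closure Ω)) (hvd : ContDiffOn ℝ 2 v Ω)
    (hveq : ∀ x ∈ Ω, laplacian v x = g (v x - A)) (hvneg : ∀ x ∈ Ω, v x < 0)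
    (hvbd : ∀ x ∈ frontier Ω, v x = 0)
    (u : ℝ → EuclideanSpace ℝ (Fin N) → ℝ)
    (hu : ∀ lam < (0:ℝ), IsClassicalSolution Ω lam f (u lam))
    (β : ℝ → ℝ) (hβneg : ∀ lam < (0:ℝ), β lam < 0)
    (hβeq : ∀ lam < (0:ℝ), -lam = α (β lam) / γ (β lam))
    (hβatBot : Tendsto β atBot atBot) :
    ∀ K ⊆ Ω, IsCompact K →
      TendstoUniformlyOn (fun lam x => u lam x / α (β lam)) v atBot K :=
  stmt_12_general Ω hΩo hΩb f hf hfpos α γ hαpos hγpos A hβα g hgpos hconv v hvc hvd hveq hvneg hvbd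
    u hu β hβneg hβeq hβatBot
end
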